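/- arXiv:0804.2032 — 4 statements merged into one kernel-verified Lean document; each statement's English description precedes it below -/
import Mathlib

section
/- Let T be an out-branching of a digraph D, and let (u,v) ∈ A(D)\A(T) with v not the root of T. The digraph T' obtained by the 1-change for (u,v) has strictly more vertices of out-degree 0 than T if and only if u ∉ Leaf(T) and v ∉ BrSucc(T). -/
/-!
Let `w` be the in-neighbour of `v` in `T`. The 1-change raises the out-degree of `u` by one,
lowers that of `w` by one and keeps all other out-degrees. Hence it loses the leaf `u` if `u`
was a leaf, gains the leaf `w` exactly when `w` had out-degree 1, i.e. when `v ∉ BrSucc(T)`,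
and changes nothing else.
-/

/-- A (finite, loopless) directed graph, given by its vertex set and arc set. -/
structure DirGraph (V : Type) where
  verts : Set V
  arcs : Set (V × V)

namespace DirGraph

variable {V : Type}

/-- Every arc joins two distinct vertices of the digraph. -/
def WellFormed (D : DirGraph V) : Prop :=
  ∀ a ∈ D.arcs, a.1 ∈ D.verts ∧ a.2 ∈ D.verts ∧ a.1 ≠ a.2

/-- `T` is a subgraph of `D`. -/
def IsSubgraph (T D : DirGraph V) : Prop :=
  T.verts ⊆ D.verts ∧ T.arcs ⊆ D.arcs

/-- The in-degree of a vertex. -/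
noncomputable def inDeg (D : DirGraph V) (v : V) : ℕ :=
  {a ∈ D.arcs | a.2 = v}.ncard

/-- The out-degree of a vertex. -/
noncomputable def outDeg (D : DirGraph V) (v : V) : ℕ :=
  {a ∈ D.arcs | a.1 = v}.ncard

/-- A dipath in `D`: a nonempty list of distinct vertices of `D`,
consecutive ones being joined by arcs of `D`. -/
def IsDipath (D : DirGraph V) (l : List V) : Prop :=
  l ≠ [] ∧ l.Nodup ∧ (∀ v ∈ l, v ∈ D.verts) ∧
    l.Chain' (fun u v => (u, v) ∈ D.arcs)

/-- `v` is reachable from `u` by a dipath of `D` (in particular,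
every vertex of `D` reaches itself). -/
def Reaches (D : DirGraph V) (u v : V) : Prop :=
  ∃ l : List V, D.IsDipath l ∧ l.head? = some u ∧ l.getLast? = some v

/-- `R_D(u)`: the set of vertices reachable from `u` in `D`. -/
def reachSet (D : DirGraph V) (u : V) : Set V := {v | D.Reaches u v}

/-- `T` is an out-tree with root `r`: `r` is the only vertex of in-degree 0,
every other vertex has in-degree 1, and the underlying graph is a tree
(equivalently, under the degree conditions, every vertex is reachable from `r`). -/
structure IsOutTree (T : DirGraph V) (r : V) : Prop where
  arcs_mem : ∀ a ∈ T.arcs, a.1 ∈ T.verts ∧ a.2 ∈ T.verts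
  root_mem : r ∈ T.verts
  root_indeg : T.inDeg r = 0
  indeg_one : ∀ v ∈ T.verts, v ≠ r → T.inDeg v = 1
  reach_root : ∀ v ∈ T.verts, T.Reaches r v

/-- `T` is an out-tree of the digraph `D`, with root `r`. -/
def IsOutTreeOf (T D : DirGraph V) (r : V) : Prop :=
  T.IsOutTree r ∧ T.IsSubgraph D

/-- `T` is an out-branching (spanning out-tree) of `D`, with root `r`. -/
def IsOutBranching (T D : DirGraph V) (r : V) : Prop :=
  T.IsOutTreeOf D r ∧ T.verts = D.verts

/-- `Leaf(T)`: the vertices of out-degree 0. -/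
def leaves (T : DirGraph V) : Set V := {v ∈ T.verts | T.outDeg v = 0}

/-- `Branch(T)`: the vertices of out-degree at least 2. -/
def branchVerts (T : DirGraph V) : Set V := {v ∈ T.verts | 2 ≤ T.outDeg v}

/-- `BrSucc(T)`: the vertices whose in-neighbor in `T` is a branch vertex. -/
def brSucc (T : DirGraph V) : Set V := {v | ∃ u, (u, v) ∈ T.arcs ∧ 2 ≤ T.outDeg u}

/-- `Head(B)`: the set of heads of the arcs in `B`. -/
def heads (B : Set (V × V)) : Set V := Prod.snd '' B

/-- `Back_D^T(z) = {(u,v) ∈ A(D) : v ≺_T z ⪯_T u}`. -/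
def backArcs (D T : DirGraph V) (z : V) : Set (V × V) :=
  {a ∈ D.arcs | (T.Reaches a.2 z ∧ a.2 ≠ z) ∧ T.Reaches z a.1}

/-- The 1-change for `(u,v)`: add the arc `(u,v)` and delete the arc of `T`
with head `v`. -/
def oneChange (T : DirGraph V) (u v : V) : DirGraph V :=
  ⟨T.verts, {a ∈ T.arcs | a.2 ≠ v} ∪ {(u, v)}⟩

/-- `ℓ(D)`: the maximum number of leaves over all out-trees of `D`. -/
noncomputable def ell (D : DirGraph V) : ℕ :=
  sSup {k | ∃ (T : DirGraph V) (r : V), IsOutTreeOf T D r ∧ (leaves T).ncard = k}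

/-- `ℓ_s(D)`: the maximum number of leaves over all out-branchings of `D`. -/
noncomputable def ellS (D : DirGraph V) : ℕ :=
  sSup {k | ∃ (T : DirGraph V) (r : V), IsOutBranching T D r ∧ (leaves T).ncard = k}

/-- An arc is useless if no out-branching of `D` contains it. -/
def Useless (D : DirGraph V) (a : V × V) : Prop :=
  ∀ (T : DirGraph V) (r : V), IsOutBranching T D r → a ∉ T.arcs

/-- `T` is a 1-optimal out-branching of `D`: no 1-change for an arc of
`A(D) \ A(T)` results in an out-branching with more leaves. -/
def IsOneOptimal (T D : DirGraph V) (r : V) : Prop :=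
  IsOutBranching T D r ∧
    ∀ u v : V, (u, v) ∈ D.arcs → (u, v) ∉ T.arcs → v ≠ r →
      ∀ r' : V, IsOutBranching (oneChange T u v) D r' →
        (leaves (oneChange T u v)).ncard ≤ (leaves T).ncard

/-- `(X, U)` is a tree decomposition of the digraph `D`: `U` is a tree,
every vertex of `D` is in some bag, both endpoints of every arc are in a
common bag, and for every vertex the set of nodes whose bags contain it
induces a subtree (a connected subgraph) of `U`. -/
structure IsTreeDecomp {ι : Type} (D : DirGraph V) (U : SimpleGraph ι) (X : ι → Set V) :
    Prop where
  tree : U.IsTree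
  mem_bag : ∀ v ∈ D.verts, ∃ i, v ∈ X i
  arc_bag : ∀ a ∈ D.arcs, ∃ i, a.1 ∈ X i ∧ a.2 ∈ X i
  bag_connected : ∀ (v : V) (i j : ι), v ∈ X i → v ∈ X j →
    Relation.ReflTransGen (fun x y => U.Adj x y ∧ v ∈ X x ∧ v ∈ X y) i j

/-- The underlying undirected graph of `T`, on the vertex set of `T`. -/
def underlying (T : DirGraph V) : SimpleGraph {v // v ∈ T.verts} :=
  SimpleGraph.fromRel fun a b => ((a : V), (b : V)) ∈ T.arcs

/-- The bag `X_v = {u, v} ∪ BrSucc(T) ∪ Leaf(T) ∪ Head(Back_D^T(v))`,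
where `u` is the in-neighbor of `v` in `T` (omitted when `v` is the root). -/
def bag (D T : DirGraph V) (v : V) : Set V :=
  {u | (u, v) ∈ T.arcs} ∪ {v} ∪ brSucc T ∪ leaves T ∪ heads (backArcs D T v)

/-- The set of arcs of a dipath given as a list of vertices. -/
def listArcs (l : List V) : Set (V × V) := {a | a ∈ l.zip l.tail}

end DirGraph

namespace DirGraph

variable {V : Type} {T : DirGraph V} {u v w : V}

theorem exists_inNeighbor_of_inDeg_eq_one (h : T.inDeg v = 1) :
    ∃ w, ∀ x, (x, v) ∈ T.arcs ↔ x = w := by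
  obtain ⟨a, ha⟩ := Set.ncard_eq_one.mp h
  have hav : a.2 = v := ((Set.ext_iff.mp ha a).mpr rfl).2
  refine ⟨a.1, fun x => ?_⟩
  have hx := Set.ext_iff.mp ha (x, v)
  simp only [Set.mem_ofPred_eq, and_true, Set.mem_singleton_iff] at hx
  rw [hx]
  constructor
  · rintro rfl; rfl
  · rintro rfl; exact Prod.ext rfl hav.symm

theorem mem_brSucc_iff (hpar : ∀ x, (x, v) ∈ T.arcs ↔ x = w) :
    v ∈ brSucc T ↔ 2 ≤ T.outDeg w := by
  simp only [brSucc, Set.mem_ofPred_eq, hpar, exists_eq_left]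

theorem outDeg_pos [Finite V] (h : (w, v) ∈ T.arcs) : 0 < T.outDeg w :=
  (Set.ncard_pos).mpr ⟨(w, v), h, rfl⟩

theorem outDeg_oneChange_of_ne (hpar : ∀ x, (x, v) ∈ T.arcs ↔ x = w) {x : V}
    (hxu : x ≠ u) (hxw : x ≠ w) : (oneChange T u v).outDeg x = T.outDeg x := by
  unfold outDeg oneChange
  congr 1
  ext ⟨a, b⟩
  simp only [Set.mem_ofPred_eq, Set.mem_union, Set.mem_singleton_iff, Prod.mk.injEq]
  grind

theorem outDeg_oneChange_tail [Finite V] (hpar : ∀ x, (x, v) ∈ T.arcs ↔ x = w) (hwu : w ≠ u) :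
    (oneChange T u v).outDeg u = T.outDeg u + 1 := by
  have hset : {a ∈ (oneChange T u v).arcs | a.1 = u} = insert (u, v) {a ∈ T.arcs | a.1 = u} := by
    ext ⟨a, b⟩
    simp only [oneChange, Set.mem_ofPred_eq, Set.mem_union, Set.mem_insert_iff,
      Set.mem_singleton_iff, Prod.mk.injEq]
    grind
  rw [outDeg, outDeg, hset, Set.ncard_insert_of_notMem]
  simp [hpar, hwu.symm]

theorem outDeg_oneChange_inNeighbor [Finite V] (hpar : ∀ x, (x, v) ∈ T.arcs ↔ x = w)
    (hwu : w ≠ u) : (oneChange T u v).outDeg w + 1 = T.outDeg w := by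
  have hset : {a ∈ (oneChange T u v).arcs | a.1 = w} = {a ∈ T.arcs | a.1 = w} \ {(w, v)} := by
    ext ⟨a, b⟩
    simp only [oneChange, Set.mem_ofPred_eq, Set.mem_union, Set.mem_sdiff,
      Set.mem_singleton_iff, Prod.mk.injEq]
    grind
  rw [outDeg, outDeg, hset]
  exact Set.ncard_sdiff_singleton_add_one ⟨(hpar w).mpr rfl, rfl⟩

theorem mem_leaves_oneChange [Finite V] (hpar : ∀ x, (x, v) ∈ T.arcs ↔ x = w) (hwu : w ≠ u)
    (hw : w ∈ T.verts) {x : V} :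
    x ∈ leaves (oneChange T u v) ↔ x ∈ leaves T \ {u} ∨ x = w ∧ T.outDeg w = 1 := by
  have hw_pos := outDeg_pos ((hpar w).mpr rfl)
  simp only [leaves, Set.mem_sdiff, Set.mem_ofPred_eq, Set.mem_singleton_iff]
  change x ∈ T.verts ∧ _ ↔ _
  rcases eq_or_ne x u with rfl | hxu
  · have := outDeg_oneChange_tail hpar hwu
    grind
  rcases eq_or_ne x w with rfl | hxw
  · have := outDeg_oneChange_inNeighbor hpar hwu
    grind
  rw [outDeg_oneChange_of_ne hpar hxu hxw]
  grind

theorem leaves_oneChange_of_outDeg_eq_one [Finite V] (hpar : ∀ x, (x, v) ∈ T.arcs ↔ x = w)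
    (hwu : w ≠ u) (hw : w ∈ T.verts) (h : T.outDeg w = 1) :
    leaves (oneChange T u v) = insert w (leaves T \ {u}) := by
  ext x
  rw [mem_leaves_oneChange hpar hwu hw]
  grind

theorem leaves_oneChange_of_two_le_outDeg [Finite V] (hpar : ∀ x, (x, v) ∈ T.arcs ↔ x = w)
    (hwu : w ≠ u) (hw : w ∈ T.verts) (h : 2 ≤ T.outDeg w) :
    leaves (oneChange T u v) = leaves T \ {u} := by
  ext x
  rw [mem_leaves_oneChange hpar hwu hw]
  grind

theorem oneChange_more_leaves_iff {V : Type} [Fintype V]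
    (D T : DirGraph V) (r u v : V) (hD : D.WellFormed)
    (hT : IsOutBranching T D r)
    (ha : (u, v) ∈ D.arcs) (haT : (u, v) ∉ T.arcs) (hv : v ≠ r) :
    (leaves T).ncard < (leaves (oneChange T u v)).ncard ↔
      u ∉ leaves T ∧ v ∉ brSucc T := by
  obtain ⟨⟨hTree, -⟩, hverts⟩ := hT
  have hvT : v ∈ T.verts := hverts ▸ (hD _ ha).2.1
  obtain ⟨w, hpar⟩ := exists_inNeighbor_of_inDeg_eq_one (hTree.indeg_one v hvT hv)
  have hwv : (w, v) ∈ T.arcs := (hpar w).mpr rfl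
  have hwu : w ≠ u := by rintro rfl; exact haT hwv
  have hwT : w ∈ T.verts := (hTree.arcs_mem _ hwv).1
  have hwL : w ∉ leaves T := fun h => (outDeg_pos hwv).ne' h.2
  rw [mem_brSucc_iff hpar]
  rcases Nat.eq_or_lt_of_le (outDeg_pos hwv) with h1 | h2
  · rw [leaves_oneChange_of_outDeg_eq_one hpar hwu hwT h1.symm]
    by_cases huL : u ∈ leaves T
    · simp [Set.ncard_exchange hwL huL, huL]
    · rw [Set.sdiff_singleton_eq_self huL, Set.ncard_insert_of_notMem hwL]
      simp [huL, ← h1]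
  · rw [leaves_oneChange_of_two_le_outDeg hpar hwu hwT h2]
    exact iff_of_false (Set.ncard_sdiff_singleton_le _ _).not_gt fun h => h.2 h2

end DirGraph
end

section
/- Let T be an out-tree of a digraph D such that |Head(Back_D^T(z))| ≥ k for some z ∈ V(T). Then D has an out-tree with at least k leaves. -/
/-!
The heads of `Back_D^T(z)` are proper ancestors of `z` in `T`, hence lie outside the subtree
of `T` rooted at `z`, while their tails lie inside it. Grafting one back arc per head onto that
subtree gives an out-tree of `D` in which every such head is a leaf.
-/

namespace DirGraph

variable {V : Type}

section Reaches

variable {D D' : DirGraph V} {l : List V} {u v w : V}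

lemma reaches_refl (hv : v ∈ D.verts) : D.Reaches v v :=
  ⟨[v], ⟨by simp, by simp, by simpa, List.isChain_singleton _⟩, rfl, rfl⟩

lemma Reaches.left_mem (h : D.Reaches u v) : u ∈ D.verts := by
  obtain ⟨l, hl, hu, _⟩ := h
  exact hl.2.2.1 u (List.mem_of_mem_head? hu)

lemma Reaches.right_mem (h : D.Reaches u v) : v ∈ D.verts := by
  obtain ⟨l, hl, _, hv⟩ := h
  exact hl.2.2.1 v (List.mem_of_mem_getLast? hv)

lemma Reaches.mono (hDD' : D.IsSubgraph D') (h : D.Reaches u v) : D'.Reaches u v := by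
  obtain ⟨l, ⟨hne, hnd, hmem, hchain⟩, hu, hv⟩ := h
  exact ⟨l, ⟨hne, hnd, fun x hx => hDD'.1 (hmem x hx), hchain.imp fun _ _ h => hDD'.2 h⟩, hu, hv⟩

lemma IsSubgraph.trans {T : DirGraph V} (hTD : T.IsSubgraph D) (hDD' : D.IsSubgraph D') :
    T.IsSubgraph D' :=
  ⟨hTD.1.trans hDD'.1, hTD.2.trans hDD'.2⟩

lemma IsDipath.exists_arc_of_mem (hl : D.IsDipath l) (hu : l.head? = some u) (hw : w ∈ l)
    (hwu : w ≠ u) : ∃ x ∈ l, (x, w) ∈ D.arcs := by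
  obtain ⟨s, t, rfl⟩ := List.append_of_mem hw
  obtain ⟨x, hx⟩ : ∃ x, s.getLast? = some x := by
    cases s with
    | nil => exact absurd (by simpa using hu) hwu
    | cons y s => exact ⟨_, List.getLast?_eq_some_getLast (List.cons_ne_nil y s)⟩
  refine ⟨x, List.mem_append_left _ (List.mem_of_mem_getLast? hx), ?_⟩
  exact (List.isChain_append.1 hl.2.2.2).2.2 x hx w rfl

lemma IsDipath.reaches_of_mem (hl : D.IsDipath l) (hu : l.head? = some u) (hw : w ∈ l) :
    D.Reaches u w := by
  obtain ⟨l₁, l₂, rfl⟩ := List.append_of_mem hw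
  refine ⟨l₁ ++ [w], ⟨by simp, ?_, ?_, ?_⟩, ?_, List.getLast?_concat⟩
  · exact hl.2.1.sublist (by simp)
  · intro x hx
    rcases List.mem_append.1 hx with h | h
    · exact hl.2.2.1 x (List.mem_append_left _ h)
    · rw [List.mem_singleton.1 h]
      exact hl.2.2.1 w hw
  · exact hl.2.2.2.prefix ⟨l₂, by simp⟩
  · cases l₁ <;> simpa using hu

lemma Reaches.trans_arc (h : D.Reaches u v) (hvw : (v, w) ∈ D.arcs) (hw : w ∈ D.verts) :
    D.Reaches u w := by
  obtain ⟨l, hl, hu, hv⟩ := h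
  by_cases hwl : w ∈ l
  · exact hl.reaches_of_mem hu hwl
  refine ⟨l ++ [w], ⟨by simp, ?_, ?_, ?_⟩, ?_, List.getLast?_concat⟩
  · simpa [List.nodup_append] using ⟨hl.2.1, fun x hx hxw => hwl (hxw ▸ hx)⟩
  · intro x hx
    rcases List.mem_append.1 hx with h | h
    · exact hl.2.2.1 x h
    · rwa [List.mem_singleton.1 h]
  · refine List.isChain_append.2 ⟨hl.2.2.2, List.isChain_singleton _, ?_⟩
    intro x hx y hy
    rw [hv, Option.mem_some_iff] at hx
    rw [List.head?_singleton, Option.mem_some_iff] at hy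
    rwa [← hx, ← hy]
  · rw [List.head?_append_of_ne_nil _ hl.1, hu]

end Reaches

section OutTree

variable [Finite V] {T : DirGraph V} {r x x' y : V}

lemma IsOutTree.ne_root_of_mem_arcs (hT : T.IsOutTree r) (h : (x, y) ∈ T.arcs) : y ≠ r := by
  rintro rfl
  have : 0 < T.inDeg y := (Set.ncard_pos (Set.toFinite _)).2 ⟨(x, y), h, rfl⟩
  exact this.ne' hT.root_indeg

lemma IsOutTree.eq_of_mem_arcs (hT : T.IsOutTree r) (h : (x, y) ∈ T.arcs)
    (h' : (x', y) ∈ T.arcs) : x = x' := by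
  obtain ⟨a, ha⟩ := Set.ncard_eq_one.1
    (hT.indeg_one y (hT.arcs_mem _ h).2 (hT.ne_root_of_mem_arcs h))
  have hx : (x, y) = a := by rw [← Set.mem_singleton_iff, ← ha]; exact ⟨h, rfl⟩
  have hx' : (x', y) = a := by rw [← Set.mem_singleton_iff, ← ha]; exact ⟨h', rfl⟩
  exact congrArg Prod.fst (hx.trans hx'.symm)

/-- A dipath from the root to a vertex of `C` has to enter `C` through an arc, whose head then
has a second in-arc coming from `C`. -/
lemma IsOutTree.eq_empty_of_forall_exists_arc (hT : T.IsOutTree r) {C : Set V}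
    (hC : ∀ w ∈ C, ∃ x ∈ C, (x, w) ∈ T.arcs) : C = ∅ := by
  by_contra hne
  obtain ⟨w, hw⟩ := Set.nonempty_iff_ne_empty.2 hne
  have hrC : r ∉ C := fun hr => by
    obtain ⟨_, _, hx⟩ := hC r hr
    exact hT.ne_root_of_mem_arcs hx rfl
  obtain ⟨_, _, hw'⟩ := hC w hw
  obtain ⟨l, hl, hr, hwl⟩ := hT.reach_root w (hT.arcs_mem _ hw').2
  obtain ⟨x, y, hxy, hxC, hyC⟩ : ∃ x y, (x, y) ∈ T.arcs ∧ x ∉ C ∧ y ∈ C := by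
    by_contra! h
    refine hl.2.2.2.induction (· ∉ C) l (fun x y hxy hx => h x y hxy hx) ?_ w
      (List.mem_of_mem_getLast? hwl) hw
    intro hne
    rwa [(List.head_eq_iff_head?_eq_some hne).2 hr]
  obtain ⟨c, hcC, hcy⟩ := hC y hyC
  exact hxC (hT.eq_of_mem_arcs hxy hcy ▸ hcC)

lemma IsOutTree.reaches_antisymm (hT : T.IsOutTree r) (hxy : T.Reaches x y)
    (hyx : T.Reaches y x) : x = y := by
  by_contra hne
  obtain ⟨p, hp, hpx, hpy⟩ := hxy
  obtain ⟨q, hq, hqy, hqx⟩ := hyx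
  -- `p` and `q` close up to a cycle, so every vertex on them has an in-arc from one of them.
  have hpred : ∀ {l l' : List V} {u u' : V}, T.IsDipath l → l.head? = some u →
      l'.getLast? = some u → l'.head? = some u' → T.IsDipath l' → u ≠ u' →
      ∀ w ∈ l, ∃ x, (x ∈ l ∨ x ∈ l') ∧ (x, w) ∈ T.arcs := by
    intro l l' u u' hl hu hu'l hu' hl' huu' w hw
    by_cases hwu : w = u
    · subst hwu
      obtain ⟨x, hx, hxw⟩ := hl'.exists_arc_of_mem hu' (List.mem_of_mem_getLast? hu'l) huu'
      exact ⟨x, Or.inr hx, hxw⟩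
    · obtain ⟨x, hx, hxw⟩ := hl.exists_arc_of_mem hu hw hwu
      exact ⟨x, Or.inl hx, hxw⟩
  have hC := hT.eq_empty_of_forall_exists_arc (C := {w | w ∈ p ∨ w ∈ q}) <| by
    rintro w (hw | hw)
    · exact hpred hp hpx hqx hqy hq hne w hw
    · obtain ⟨x, hx, hxw⟩ := hpred hq hqy hpy hpx hp (Ne.symm hne) w hw
      exact ⟨x, hx.symm, hxw⟩
  exact hC.subset (Or.inl (List.mem_of_mem_head? hpx) : x ∈ {w | w ∈ p ∨ w ∈ q})

lemma IsOutTree.not_reaches_of_mem_arcs (hT : T.IsOutTree r) (h : (x, y) ∈ T.arcs) :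
    ¬ T.Reaches y x := by
  rintro ⟨l, hl, hy, hx⟩
  have hC := hT.eq_empty_of_forall_exists_arc (C := {w | w ∈ l}) <| by
    intro w hw
    by_cases hwy : w = y
    · exact ⟨x, List.mem_of_mem_getLast? hx, hwy ▸ h⟩
    · exact hl.exists_arc_of_mem hy hw hwy
  exact hC.subset (List.mem_of_mem_head? hy : y ∈ {w | w ∈ l})

end OutTree

section Subtree

variable {T : DirGraph V} {r z w : V}

def subtreeAt (T : DirGraph V) (z : V) : DirGraph V :=
  ⟨T.reachSet z, {a ∈ T.arcs | a.1 ∈ T.reachSet z}⟩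

lemma subtreeAt_isSubgraph : (T.subtreeAt z).IsSubgraph T :=
  ⟨fun _ hw => Reaches.right_mem hw, fun _ ha => ha.1⟩

lemma Reaches.subtreeAt (h : T.Reaches z w) : (T.subtreeAt z).Reaches z w := by
  obtain ⟨l, hl, hz, hw⟩ := h
  have hmem : ∀ x ∈ l, T.Reaches z x := fun x hx => hl.reaches_of_mem hz hx
  exact ⟨l, ⟨hl.1, hl.2.1, hmem, hl.2.2.2.imp_of_mem_imp fun x _ hx _ hxy => ⟨hxy, hmem x hx⟩⟩,
    hz, hw⟩

lemma IsOutTree.subtreeAt [Finite V] (hT : T.IsOutTree r) (hz : z ∈ T.verts) :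
    (T.subtreeAt z).IsOutTree z where
  arcs_mem a ha := ⟨ha.2, ha.2.trans_arc ha.1 (hT.arcs_mem a ha.1).2⟩
  root_mem := reaches_refl hz
  root_indeg := by
    rw [inDeg, Set.ncard_eq_zero, Set.eq_empty_iff_forall_notMem]
    rintro ⟨x, _⟩ ⟨⟨hxz, hzx⟩, rfl⟩
    exact hT.not_reaches_of_mem_arcs hxz hzx
  indeg_one w hw hwz := by
    obtain ⟨l, hl, hzl, hwl⟩ : T.Reaches z w := hw
    obtain ⟨x, hxl, hxw⟩ := hl.exists_arc_of_mem hzl (List.mem_of_mem_getLast? hwl) hwz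
    have hin : {a ∈ (T.subtreeAt z).arcs | a.2 = w} = {a ∈ T.arcs | a.2 = w} := by
      ext ⟨x', w'⟩
      refine ⟨fun ⟨ha, hw'⟩ => ⟨ha.1, hw'⟩, ?_⟩
      rintro ⟨hx'w, rfl : w' = w⟩
      refine ⟨⟨hx'w, ?_⟩, rfl⟩
      rw [← hT.eq_of_mem_arcs hxw hx'w]
      exact hl.reaches_of_mem hzl hxl
    rw [inDeg, hin]
    exact hT.indeg_one w (hT.arcs_mem _ hxw).2 (hT.ne_root_of_mem_arcs hxw)
  reach_root _ hw := Reaches.subtreeAt hw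

end Subtree

section AddArcs

variable {D S : DirGraph V} {A : Set (V × V)} {z v : V}

def addArcs (S : DirGraph V) (A : Set (V × V)) : DirGraph V :=
  ⟨S.verts ∪ heads A, S.arcs ∪ A⟩

lemma IsSubgraph.addArcs (hS : S.IsSubgraph D) (hA : A ⊆ D.arcs) (hAD : heads A ⊆ D.verts) :
    (S.addArcs A).IsSubgraph D :=
  ⟨Set.union_subset hS.1 hAD, Set.union_subset hS.2 hA⟩

lemma inDeg_addArcs_of_mem (hhead : ∀ a ∈ A, a.2 ∉ S.verts) (hv : v ∈ S.verts) :
    (S.addArcs A).inDeg v = S.inDeg v := by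
  have hin : {a ∈ (S.addArcs A).arcs | a.2 = v} = {a ∈ S.arcs | a.2 = v} := by
    ext a
    refine ⟨?_, fun ⟨ha, hav⟩ => ⟨Or.inl ha, hav⟩⟩
    rintro ⟨ha | ha, rfl⟩
    · exact ⟨ha, rfl⟩
    · exact absurd hv (hhead a ha)
  rw [inDeg, inDeg, hin]

lemma inDeg_addArcs_of_mem_heads (hS : ∀ a ∈ S.arcs, a.2 ∈ S.verts)
    (hhead : ∀ a ∈ A, a.2 ∉ S.verts) (hinj : Set.InjOn Prod.snd A) {a : V × V} (ha : a ∈ A) :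
    (S.addArcs A).inDeg a.2 = 1 := by
  rw [inDeg, Set.ncard_eq_one]
  refine ⟨a, Set.eq_singleton_iff_unique_mem.2 ⟨⟨Or.inr ha, rfl⟩, ?_⟩⟩
  rintro b ⟨hb | hb, hba⟩
  · exact absurd (hba ▸ hS b hb) (hhead a ha)
  · exact hinj hb ha hba

lemma heads_subset_leaves_addArcs (hS : ∀ a ∈ S.arcs, a.1 ∈ S.verts)
    (htail : ∀ a ∈ A, a.1 ∈ S.verts) (hhead : ∀ a ∈ A, a.2 ∉ S.verts) :
    heads A ⊆ (S.addArcs A).leaves := by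
  rintro _ ⟨a, ha, rfl⟩
  refine ⟨Or.inr ⟨a, ha, rfl⟩, ?_⟩
  have hout : {b ∈ (S.addArcs A).arcs | b.1 = a.2} = ∅ := by
    refine Set.eq_empty_iff_forall_notMem.2 ?_
    rintro b ⟨hb | hb, hba⟩
    · exact hhead a ha (hba ▸ hS b hb)
    · exact hhead a ha (hba ▸ htail b hb)
  rw [outDeg, hout, Set.ncard_empty]

lemma IsOutTree.addArcs (hS : S.IsOutTree z) (htail : ∀ a ∈ A, a.1 ∈ S.verts)
    (hhead : ∀ a ∈ A, a.2 ∉ S.verts) (hinj : Set.InjOn Prod.snd A) :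
    (S.addArcs A).IsOutTree z where
  arcs_mem a := by
    rintro (ha | ha)
    · exact ⟨Or.inl (hS.arcs_mem a ha).1, Or.inl (hS.arcs_mem a ha).2⟩
    · exact ⟨Or.inl (htail a ha), Or.inr ⟨a, ha, rfl⟩⟩
  root_mem := Or.inl hS.root_mem
  root_indeg := by rw [inDeg_addArcs_of_mem hhead hS.root_mem, hS.root_indeg]
  indeg_one v := by
    rintro (hv | ⟨a, ha, rfl⟩) hvz
    · rw [inDeg_addArcs_of_mem hhead hv, hS.indeg_one v hv hvz]
    · exact inDeg_addArcs_of_mem_heads (fun b hb => (hS.arcs_mem b hb).2) hhead hinj ha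
  reach_root v := by
    have hSA : S.IsSubgraph (S.addArcs A) := ⟨Set.subset_union_left, Set.subset_union_left⟩
    rintro (hv | ⟨a, ha, rfl⟩)
    · exact (hS.reach_root v hv).mono hSA
    · exact ((hS.reach_root _ (htail a ha)).mono hSA).trans_arc (Or.inr ha) (Or.inr ⟨a, ha, rfl⟩)

end AddArcs

lemma IsOutTree.not_reaches_of_mem_backArcs [Finite V] {D T : DirGraph V} {r z : V}
    (hT : T.IsOutTree r) {a : V × V} (ha : a ∈ backArcs D T z) : ¬ T.Reaches z a.2 :=
  fun hza => ha.2.1.2 (hT.reaches_antisymm ha.2.1.1 hza)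

theorem outTree_of_many_backArcs_general {V : Type} [Fintype V]
    (D T : DirGraph V) (r z : V) (k : ℕ)
    (hT : IsOutTreeOf T D r) (hz : z ∈ T.verts)
    (hk : k ≤ (heads (backArcs D T z)).ncard) :
    ∃ (T' : DirGraph V) (r' : V), IsOutTreeOf T' D r' ∧ k ≤ (leaves T').ncard := by
  obtain ⟨hT, hTD⟩ := hT
  obtain ⟨A, hAB, hA⟩ := Set.exists_subset_bijOn (backArcs D T z) Prod.snd
  have htail : ∀ a ∈ A, a.1 ∈ (T.subtreeAt z).verts := fun a ha => (hAB ha).2.2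
  have hhead : ∀ a ∈ A, a.2 ∉ (T.subtreeAt z).verts := fun a ha =>
    hT.not_reaches_of_mem_backArcs (hAB ha)
  have hAD : heads A ⊆ D.verts := by
    rintro _ ⟨a, ha, rfl⟩
    exact hTD.1 (hAB ha).2.1.1.left_mem
  have hST := hT.subtreeAt hz
  refine ⟨(T.subtreeAt z).addArcs A, z, ⟨hST.addArcs htail hhead hA.injOn,
    (subtreeAt_isSubgraph.trans hTD).addArcs (fun a ha => (hAB ha).1) hAD⟩, ?_⟩
  calc k ≤ (heads (backArcs D T z)).ncard := hk
    _ = (heads A).ncard := by rw [heads, heads, hA.image_eq]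
    _ ≤ _ := Set.ncard_le_ncard
      (heads_subset_leaves_addArcs (fun a ha => (hST.arcs_mem a ha).1) htail hhead)
      (Set.toFinite _)

theorem outTree_of_many_backArcs {V : Type} [Fintype V]
    (D T : DirGraph V) (r z : V) (k : ℕ) (hD : D.WellFormed)
    (hT : IsOutTreeOf T D r) (hz : z ∈ T.verts)
    (hk : k ≤ (heads (backArcs D T z)).ncard) :
    ∃ (T' : DirGraph V) (r' : V), IsOutTreeOf T' D r' ∧ k ≤ (leaves T').ncard :=
  outTree_of_many_backArcs_general D T r z k hT hz hk

end DirGraph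
end

section
/- Let T be a 1-optimal out-branching of a digraph D. Then the pair (X, T), where for each v ∈ V(T) the bag is X_v = {u, v} ∪ BrSucc(T) ∪ Leaf(T) ∪ Head(Back_D^T(v)) with u the in-neighbor of v in T (and u omitted when v is the root), is a tree decomposition of D (with the underlying undirected tree of T as its tree). -/
/-!
Since every non-root vertex of an out-tree has a unique parent, a cycle of arcs would climb back
to the root; so every edge of the underlying graph is a bridge and that graph is a tree.

A tree arc lies in the bag of its head and a back arc in the bag of its tail. For any other arc
`(x, y)`, if the parent `w` of `y` had out-degree one and `x` were not a leaf, the 1-change for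
`(x, y)` would make `w` a new leaf and keep all old ones, against 1-optimality. Hence
`y ∈ BrSucc(T) ⊆ X_x` or `x ∈ Leaf(T) ⊆ X_y`.

A vertex `x` in `BrSucc(T) ∪ Leaf(T)` is in every bag. Otherwise a bag `X_i` containing `x` is
`X_x`, the bag of a child of `x`, or one with `x` the head of a back arc over `i`; then `x` is
such a head over every vertex of the dipath from `x` to `i`, so these bags are connected to `X_x`.
-/

namespace DirGraph

open Relation

variable {V : Type}

def Arc (D : DirGraph V) (u v : V) : Prop := (u, v) ∈ D.arcs

section Reachability

variable {D : DirGraph V} {u v : V}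

theorem reaches_iff_reflTransGen (hD : ∀ a ∈ D.arcs, a.2 ∈ D.verts) :
    D.Reaches u v ↔ u ∈ D.verts ∧ ReflTransGen D.Arc u v := by
  constructor
  · rintro ⟨_ | ⟨a, l⟩, ⟨hne, -, hverts, hchain⟩, hhead, hlast⟩
    · exact absurd rfl hne
    obtain rfl : a = u := by simpa using hhead
    refine ⟨hverts a (by simp), List.relationReflTransGen_of_exists_isChain_cons l hchain ?_⟩
    rw [List.getLast?_eq_some_getLast (List.cons_ne_nil _ _)] at hlast
    exact Option.some_inj.1 hlast
  · rintro ⟨hu, h⟩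
    induction h with
    | refl => exact ⟨[u], ⟨by simp, by simp, by simpa, List.isChain_singleton u⟩, rfl, rfl⟩
    | @tail b c _ hbc ih =>
      obtain ⟨l, ⟨hne, hnd, hverts, hchain⟩, hhead, hlast⟩ := ih
      by_cases hc : c ∈ l
      · -- a walk revisiting `c` is cut back at its first visit
        obtain ⟨l₁, l₂, rfl⟩ := List.append_of_mem hc
        have hpre : l₁ ++ [c] <+: l₁ ++ c :: l₂ := ⟨l₂, by simp⟩
        refine ⟨l₁ ++ [c], ⟨by simp, hnd.sublist hpre.sublist,
          fun x hx => hverts x (hpre.sublist.mem hx), hchain.prefix hpre⟩, ?_, by simp⟩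
        cases l₁ <;> simpa using hhead
      · refine ⟨l ++ [c], ⟨by simp, ?_, ?_, ?_⟩, ?_, by simp⟩
        · simpa [List.nodup_append] using ⟨hnd, fun x hx h => hc (h ▸ hx)⟩
        · simpa [or_imp, forall_and] using ⟨hverts, hD _ hbc⟩
        · exact List.IsChain.append hchain (List.isChain_singleton c) (by simp_all [Arc])
        · cases l <;> simp_all

end Reachability

section Degrees

variable {D : DirGraph V} {v w b : V}

theorem eq_of_outDeg_eq_one (hw : D.outDeg w = 1)
    (hv : D.Arc w v) (hb : D.Arc w b) : b = v := by
  obtain ⟨x, hx⟩ := Set.ncard_eq_one.1 hw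
  have hvx : (w, v) = x := hx.subset (⟨hv, rfl⟩ : (w, v) ∈ {x ∈ D.arcs | x.1 = w})
  have hbx : (w, b) = x := hx.subset (⟨hb, rfl⟩ : (w, b) ∈ {x ∈ D.arcs | x.1 = w})
  exact congrArg Prod.snd (hbx.trans hvx.symm)

variable [Finite V]

theorem outDeg_eq_zero_iff : D.outDeg v = 0 ↔ ∀ b, ¬ D.Arc v b := by
  rw [outDeg, Set.ncard_eq_zero (Set.toFinite _), Set.eq_empty_iff_forall_notMem]
  simp only [Set.mem_ofPred_eq, not_and, Arc, Prod.forall]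
  exact ⟨fun h b hb => h v b hb rfl, fun h a b hab haz => h b (haz ▸ hab)⟩

end Degrees


namespace IsOutTree

variable {T : DirGraph V} {r u v a b : V}

theorem reaches_iff (hT : T.IsOutTree r) :
    T.Reaches u v ↔ u ∈ T.verts ∧ ReflTransGen T.Arc u v :=
  reaches_iff_reflTransGen fun a ha => (hT.arcs_mem a ha).2

theorem reflTransGen_root (hT : T.IsOutTree r) (hv : v ∈ T.verts) : ReflTransGen T.Arc r v :=
  (hT.reaches_iff.1 (hT.reach_root v hv)).2

theorem exists_arc (hT : T.IsOutTree r) (hv : v ∈ T.verts) (hvr : v ≠ r) :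
    ∃ a, T.Arc a v := by
  obtain ⟨x, hx⟩ := Set.ncard_eq_one.1 (hT.indeg_one v hv hvr)
  obtain ⟨hxT, hxv⟩ : x ∈ {x ∈ T.arcs | x.2 = v} := hx ▸ rfl
  exact ⟨x.1, hxv ▸ hxT⟩

theorem mem_verts_of_reflTransGen (hT : T.IsOutTree r) (hu : u ∈ T.verts)
    (h : ReflTransGen T.Arc u v) : v ∈ T.verts := by
  rcases h.cases_tail with rfl | ⟨c, -, hcv⟩
  exacts [hu, (hT.arcs_mem _ hcv).2]

variable [Finite V]

theorem not_arc_root (hT : T.IsOutTree r) : ¬ T.Arc a r := fun ha => by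
  have h := (Set.ncard_eq_zero (Set.toFinite _)).1 hT.root_indeg
  exact h.subset (⟨ha, rfl⟩ : (a, r) ∈ {x ∈ T.arcs | x.2 = r})

theorem eq_of_arc (hT : T.IsOutTree r) (ha : T.Arc a v) (hb : T.Arc b v) : a = b := by
  have hvr : v ≠ r := by
    rintro rfl
    exact hT.not_arc_root ha
  obtain ⟨x, hx⟩ := Set.ncard_eq_one.1 (hT.indeg_one v (hT.arcs_mem _ ha).2 hvr)
  have hax : (a, v) = x := hx.subset (⟨ha, rfl⟩ : (a, v) ∈ {x ∈ T.arcs | x.2 = v})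
  have hbx : (b, v) = x := hx.subset (⟨hb, rfl⟩ : (b, v) ∈ {x ∈ T.arcs | x.2 = v})
  exact congrArg Prod.fst (hax.trans hbx.symm)

theorem not_transGen_self (hT : T.IsOutTree r) : ¬ TransGen T.Arc v v := by
  intro hv
  obtain ⟨a, -, hav⟩ := TransGen.tail'_iff.1 hv
  have hroot : ReflTransGen T.Arc r v := hT.reflTransGen_root (hT.arcs_mem _ hav).2
  clear hav
  induction hroot with
  | refl =>
    obtain ⟨a, -, har⟩ := TransGen.tail'_iff.1 hv
    exact hT.not_arc_root har
  | @tail b c _ hbc ih =>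
    obtain ⟨a, hca, hac⟩ := TransGen.tail'_iff.1 hv
    exact ih (TransGen.head' hbc (hT.eq_of_arc hac hbc ▸ hca))

theorem ne_of_arc (hT : T.IsOutTree r) (h : T.Arc a b) : a ≠ b := by
  rintro rfl
  exact hT.not_transGen_self (TransGen.single h)

end IsOutTree

section Underlying

variable [Finite V] {T : DirGraph V} {r : V}

theorem underlying_adj_of_arc (hT : T.IsOutTree r) {x y : {v // v ∈ T.verts}}
    (h : T.Arc x y) : (underlying T).Adj x y := by
  rw [underlying, SimpleGraph.fromRel_adj]
  exact ⟨fun hxy => hT.ne_of_arc h (congrArg Subtype.val hxy), Or.inl h⟩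

theorem underlying_connected (hT : T.IsOutTree r) : (underlying T).Connected := by
  have hreach : ∀ v, ReflTransGen T.Arc r v →
      ∀ hv : v ∈ T.verts, (underlying T).Reachable ⟨r, hT.root_mem⟩ ⟨v, hv⟩ := by
    intro v h
    induction h with
    | refl => exact fun _ => .rfl
    | tail _ hbc ih =>
      exact fun _ => (ih (hT.arcs_mem _ hbc).1).trans (underlying_adj_of_arc hT hbc).reachable
  have : Nonempty {v // v ∈ T.verts} := ⟨⟨r, hT.root_mem⟩⟩
  exact ⟨fun x y => (hreach x (hT.reflTransGen_root x.2) x.2).symm.trans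
    (hreach y (hT.reflTransGen_root y.2) y.2)⟩

/-- Removing the edge of an arc `(x, y)` separates the vertices below `y` from the rest. -/
theorem underlying_isBridge (hT : T.IsOutTree r) {x y : {v // v ∈ T.verts}} (h : T.Arc x y) :
    (underlying T).IsBridge s(x, y) := by
  rw [SimpleGraph.isBridge_iff, SimpleGraph.reachable_comm,
    SimpleGraph.reachable_iff_reflTransGen]
  intro hyx
  suffices hbelow : ∀ z, ReflTransGen ((underlying T).deleteEdges {s(x, y)}).Adj y z →
      ReflTransGen T.Arc y z from
    hT.not_transGen_self (TransGen.head' h (hbelow x hyx))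
  intro z hz
  induction hz with
  | refl => rfl
  | @tail z w _ hzw ih =>
    rw [SimpleGraph.deleteEdges_adj, underlying, SimpleGraph.fromRel_adj] at hzw
    obtain ⟨⟨-, hzw | hwz⟩, hne⟩ := hzw
    · exact ih.tail hzw
    · rcases ih.cases_tail with hzy | ⟨c, hyc, hcz⟩
      · obtain rfl : z = y := Subtype.ext hzy
        obtain rfl : w = x := Subtype.ext (hT.eq_of_arc hwz h)
        exact absurd Sym2.eq_swap hne
      · exact hT.eq_of_arc hwz hcz ▸ hyc

theorem underlying_isTree (hT : T.IsOutTree r) : (underlying T).IsTree := by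
  refine ⟨underlying_connected hT, SimpleGraph.isAcyclic_iff_forall_adj_isBridge.2 ?_⟩
  intro x y hxy
  rw [underlying, SimpleGraph.fromRel_adj] at hxy
  rcases hxy.2 with h | h
  · exact underlying_isBridge hT h
  · exact Sym2.eq_swap ▸ underlying_isBridge hT h

end Underlying

section OneChange

variable {T : DirGraph V} {r u v : V}

theorem oneChange_arc_iff {a b : V} :
    (oneChange T u v).Arc a b ↔ (T.Arc a b ∧ b ≠ v) ∨ (a = u ∧ b = v) := by
  simp [oneChange, Arc, or_comm]

theorem inDeg_oneChange_of_ne {z : V} (hz : z ≠ v) : (oneChange T u v).inDeg z = T.inDeg z := by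
  unfold inDeg
  congr 1
  ext ⟨a, b⟩
  simp only [oneChange, Set.mem_ofPred_eq, Set.mem_union, Set.mem_singleton_iff, Prod.mk.injEq]
  constructor
  · rintro ⟨⟨h, -⟩ | ⟨-, rfl⟩, rfl⟩
    exacts [⟨h, rfl⟩, absurd rfl hz]
  · rintro ⟨h, rfl⟩
    exact ⟨Or.inl ⟨h, hz⟩, rfl⟩

theorem inDeg_oneChange_self : (oneChange T u v).inDeg v = 1 := by
  rw [inDeg, Set.ncard_eq_one]
  refine ⟨(u, v), ?_⟩
  ext ⟨a, b⟩
  simp only [oneChange, Set.mem_ofPred_eq, Set.mem_union, Set.mem_singleton_iff, Prod.mk.injEq]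
  constructor
  · rintro ⟨⟨-, h⟩ | h, rfl⟩
    exacts [absurd rfl h, h]
  · rintro ⟨rfl, rfl⟩
    exact ⟨Or.inr ⟨rfl, rfl⟩, rfl⟩

variable [Finite V]

/-- Vertices outside the subtree of `v` keep their old dipath from the root; those inside
are reached through the new arc `(u, v)`. -/
theorem reflTransGen_oneChange (hT : T.IsOutTree r) (hu : u ∈ T.verts)
    (hvu : ¬ ReflTransGen T.Arc v u) {z : V} (hz : z ∈ T.verts) :
    ReflTransGen (oneChange T u v).Arc r z := by
  have houtside : ∀ z, ReflTransGen T.Arc r z → ¬ ReflTransGen T.Arc v z →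
      ReflTransGen (oneChange T u v).Arc r z := by
    intro z h
    induction h with
    | refl => exact fun _ => .refl
    | tail _ hbc ih =>
      intro hvc
      refine (ih fun hvb => hvc (hvb.tail hbc)).tail (oneChange_arc_iff.2 (Or.inl ⟨hbc, ?_⟩))
      rintro rfl
      exact hvc .refl
  have hinside : ∀ z, ReflTransGen T.Arc v z → ReflTransGen (oneChange T u v).Arc v z := by
    intro z h
    induction h with
    | refl => exact .refl
    | tail hvb hbc ih =>
      refine ih.tail (oneChange_arc_iff.2 (Or.inl ⟨hbc, ?_⟩))
      rintro rfl
      exact hT.not_transGen_self (TransGen.tail' hvb hbc)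
  by_cases hvz : ReflTransGen T.Arc v z
  · exact ((houtside u (hT.reflTransGen_root hu) hvu).tail
      (oneChange_arc_iff.2 (Or.inr ⟨rfl, rfl⟩))).trans (hinside z hvz)
  · exact houtside z (hT.reflTransGen_root hz) hvz

theorem isOutTree_oneChange (hT : T.IsOutTree r) (hu : u ∈ T.verts) (hv : v ∈ T.verts)
    (hvu : ¬ ReflTransGen T.Arc v u) : (oneChange T u v).IsOutTree r where
  arcs_mem a ha := by
    rcases ha with ⟨ha, -⟩ | rfl
    exacts [hT.arcs_mem a ha, ⟨hu, hv⟩]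
  root_mem := hT.root_mem
  root_indeg := by
    have hvr : r ≠ v := by
      rintro rfl
      exact hvu (hT.reflTransGen_root hu)
    rw [inDeg_oneChange_of_ne hvr]
    exact hT.root_indeg
  indeg_one z hz hzr := by
    by_cases hzv : z = v
    · exact hzv ▸ inDeg_oneChange_self
    · rw [inDeg_oneChange_of_ne hzv]
      exact hT.indeg_one z hz hzr
  reach_root z hz := by
    refine (reaches_iff_reflTransGen ?_).2 ⟨hT.root_mem, reflTransGen_oneChange hT hu hvu hz⟩
    rintro a (⟨ha, -⟩ | rfl)
    exacts [(hT.arcs_mem a ha).2, hv]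

theorem isOutBranching_oneChange {D : DirGraph V} (hT : IsOutBranching T D r)
    (huv : (u, v) ∈ D.arcs) (hu : u ∈ D.verts) (hv : v ∈ D.verts)
    (hvu : ¬ ReflTransGen T.Arc v u) : IsOutBranching (oneChange T u v) D r := by
  obtain ⟨⟨hT, hverts, harcs⟩, hspan⟩ := hT
  refine ⟨⟨isOutTree_oneChange hT (hspan ▸ hu) (hspan ▸ hv) hvu, hverts, ?_⟩, hspan⟩
  rintro a (⟨ha, -⟩ | rfl)
  exacts [harcs ha, huv]

theorem leaves_oneChange (hT : T.IsOutTree r) {w : V} (hwv : T.Arc w v) (hw : T.outDeg w = 1)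
    (hu : T.outDeg u ≠ 0) (huw : u ≠ w) :
    leaves (oneChange T u v) = insert w (leaves T) := by
  ext z
  simp only [leaves, Set.mem_insert_iff, Set.mem_ofPred_eq, outDeg_eq_zero_iff, oneChange_arc_iff]
  obtain ⟨b₀, hub₀⟩ : ∃ b, T.Arc u b := by simpa [outDeg_eq_zero_iff] using hu
  change (z ∈ T.verts ∧ _) ↔ _
  constructor
  · rintro ⟨hz, hno⟩
    by_cases hzw : z = w
    · exact Or.inl hzw
    refine Or.inr ⟨hz, fun b hzb => ?_⟩
    by_cases hbv : b = v
    · exact hzw (hT.eq_of_arc (hbv ▸ hzb) hwv)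
    · exact hno b (Or.inl ⟨hzb, hbv⟩)
  · rintro (rfl | ⟨hz, hleaf⟩)
    · refine ⟨(hT.arcs_mem _ hwv).1, fun b => ?_⟩
      rintro (⟨hzb, hbv⟩ | ⟨rfl, -⟩)
      exacts [hbv (eq_of_outDeg_eq_one hw hwv hzb), huw rfl]
    · refine ⟨hz, fun b => ?_⟩
      rintro (⟨hzb, -⟩ | ⟨rfl, -⟩)
      exacts [hleaf b hzb, hleaf b₀ hub₀]

end OneChange

section Bags

variable {D T : DirGraph V} {r x y : V}

theorem mem_bag_iff {z : V} : x ∈ bag D T z ↔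
    T.Arc x z ∨ x = z ∨ x ∈ brSucc T ∨ x ∈ leaves T ∨ x ∈ heads (backArcs D T z) := by
  simp only [bag, Set.mem_union, Set.mem_ofPred_eq, Set.mem_singleton_iff, or_assoc, Arc]

theorem self_mem_bag : x ∈ bag D T x :=
  mem_bag_iff.2 (Or.inr (Or.inl rfl))

theorem mem_heads_backArcs_iff (hT : T.IsOutTree r) {z : V} :
    x ∈ heads (backArcs D T z) ↔ x ∈ T.verts ∧ ReflTransGen T.Arc x z ∧ x ≠ z ∧
      ∃ u, (u, x) ∈ D.arcs ∧ ReflTransGen T.Arc z u := by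
  simp only [heads, backArcs, Set.mem_image, Set.mem_ofPred_eq, Prod.exists, exists_eq_right,
    hT.reaches_iff]
  constructor
  · rintro ⟨u, hux, ⟨⟨hx, hxz⟩, hne⟩, -, hzu⟩
    exact ⟨hx, hxz, hne, u, hux, hzu⟩
  · rintro ⟨hx, hxz, hne, u, hux, hzu⟩
    exact ⟨u, hux, ⟨⟨hx, hxz⟩, hne⟩, hT.mem_verts_of_reflTransGen hx hxz, hzu⟩

theorem mem_verts_of_mem_bag (hT : T.IsOutTree r) {z : V} (hz : z ∈ T.verts)
    (h : x ∈ bag D T z) : x ∈ T.verts := by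
  rcases mem_bag_iff.1 h with h | rfl | ⟨c, hcx, -⟩ | h | h
  exacts [(hT.arcs_mem _ h).1, hz, (hT.arcs_mem _ hcx).2, h.1,
    ((mem_heads_backArcs_iff hT).1 h).1]

def BagAdj (D T : DirGraph V) (x : V) (i j : {v // v ∈ T.verts}) : Prop :=
  (underlying T).Adj i j ∧ x ∈ bag D T i ∧ x ∈ bag D T j

instance : Std.Symm (BagAdj D T x) :=
  ⟨fun _ _ h => ⟨h.1.symm, h.2.2, h.2.1⟩⟩

variable [Finite V]

theorem IsOneOptimal.mem_brSucc_or_mem_leaves (hT : IsOneOptimal T D r)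
    (hxy : (x, y) ∈ D.arcs) (hx : x ∈ D.verts) (hy : y ∈ D.verts) (hxyT : ¬ T.Arc x y)
    (hyx : ¬ ReflTransGen T.Arc y x) :
    y ∈ brSucc T ∨ x ∈ leaves T := by
  obtain ⟨hTB, hopt⟩ := hT
  have hOT : T.IsOutTree r := hTB.1.1
  have hyr : y ≠ r := by
    rintro rfl
    exact hyx (hOT.reflTransGen_root (hTB.2 ▸ hx))
  obtain ⟨w, hwy⟩ := hOT.exists_arc (hTB.2 ▸ hy) hyr
  by_contra! hcon
  have hw : T.outDeg w = 1 := by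
    have hpos : 0 < T.outDeg w := by
      rw [outDeg, Set.ncard_pos (Set.toFinite _)]
      exact ⟨(w, y), hwy, rfl⟩
    have hlt : ¬ 2 ≤ T.outDeg w := fun h2 => hcon.1 ⟨w, hwy, h2⟩
    omega
  have hx0 : T.outDeg x ≠ 0 := fun h0 => hcon.2 ⟨hTB.2 ▸ hx, h0⟩
  have hxw : x ≠ w := by
    rintro rfl
    exact hxyT hwy
  have hleaves := leaves_oneChange hOT hwy hw hx0 hxw
  have hw_leaf : w ∉ leaves T := fun h => one_ne_zero (hw.symm.trans h.2)
  have hle := hopt x y hxy hxyT hyr r (isOutBranching_oneChange hTB hxy hx hy hyx)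
  rw [hleaves, Set.ncard_insert_of_notMem hw_leaf (Set.toFinite _)] at hle
  omega

theorem IsOneOptimal.exists_bag_of_arc (hT : IsOneOptimal T D r) (hD : D.WellFormed)
    (hxy : (x, y) ∈ D.arcs) :
    ∃ i : {v // v ∈ T.verts}, x ∈ bag D T i ∧ y ∈ bag D T i := by
  obtain ⟨hx, hy, hne⟩ := hD _ hxy
  have hspan : T.verts = D.verts := hT.1.2
  by_cases hxyT : T.Arc x y
  · exact ⟨⟨y, hspan ▸ hy⟩, mem_bag_iff.2 (by tauto), self_mem_bag⟩
  by_cases hyx : ReflTransGen T.Arc y x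
  · have hback : y ∈ heads (backArcs D T x) :=
      (mem_heads_backArcs_iff hT.1.1.1).2 ⟨hspan ▸ hy, hyx, hne.symm, x, hxy, .refl⟩
    exact ⟨⟨x, hspan ▸ hx⟩, self_mem_bag, mem_bag_iff.2 (by tauto)⟩
  rcases hT.mem_brSucc_or_mem_leaves hxy hx hy hxyT hyx with h | h
  · exact ⟨⟨x, hspan ▸ hx⟩, self_mem_bag, mem_bag_iff.2 (by tauto)⟩
  · exact ⟨⟨y, hspan ▸ hy⟩, mem_bag_iff.2 (by tauto), self_mem_bag⟩

theorem reflTransGen_bagAdj_of_forall_mem_bag (hT : T.IsOutTree r)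
    (hall : ∀ j, x ∈ bag D T j) (i j : {v // v ∈ T.verts}) :
    ReflTransGen (BagAdj D T x) i j :=
  ReflTransGen.mono (fun _ _ h => ⟨h, hall _, hall _⟩) _ _ <|
    (SimpleGraph.reachable_iff_reflTransGen i j).1 ((underlying_connected hT).preconnected i j)

theorem reflTransGen_bagAdj_of_mem_heads (hT : T.IsOutTree r) (hx : x ∈ T.verts)
    {i : {v // v ∈ T.verts}} (hxi : x ∈ heads (backArcs D T i)) :
    ReflTransGen (BagAdj D T x) ⟨x, hx⟩ i := by
  obtain ⟨-, hxi, -, u, hux, hiu⟩ := (mem_heads_backArcs_iff hT).1 hxi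
  have hback : ∀ c, c ≠ x → ReflTransGen T.Arc x c → ReflTransGen T.Arc c i →
      x ∈ bag D T c := fun c hcx hxc hci => by
    have hhead :=
      (mem_heads_backArcs_iff (D := D) hT).2 ⟨hx, hxc, hcx.symm, u, hux, hci.trans hiu⟩
    exact mem_bag_iff.2 (by tauto)
  suffices key : ∀ z, ReflTransGen T.Arc x z → ∀ hz : z ∈ T.verts,
      ReflTransGen T.Arc z i → ReflTransGen (BagAdj D T x) ⟨x, hx⟩ ⟨z, hz⟩ from
    key i hxi i.2 .refl
  intro z hxz
  induction hxz with
  | refl => exact fun _ _ => .refl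
  | @tail y z hxy hyz ih =>
    intro hz hzi
    have hy : y ∈ T.verts := (hT.arcs_mem _ hyz).1
    have hyi : ReflTransGen T.Arc y i := .head hyz hzi
    have hzx : z ≠ x := by
      rintro rfl
      exact hT.not_transGen_self (TransGen.tail' hxy hyz)
    have hy_bag : x ∈ bag D T y := by
      by_cases hyx : y = x
      · exact hyx ▸ self_mem_bag
      · exact hback y hyx hxy hyi
    exact (ih hy hyi).tail
      ⟨underlying_adj_of_arc hT hyz, hy_bag, hback z hzx (hxy.tail hyz) hzi⟩

theorem reflTransGen_bagAdj_of_mem_bag (hT : T.IsOutTree r) {i : {v // v ∈ T.verts}}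
    (hxi : x ∈ bag D T i) :
    ReflTransGen (BagAdj D T x) ⟨x, mem_verts_of_mem_bag hT i.2 hxi⟩ i := by
  have hx := mem_verts_of_mem_bag hT i.2 hxi
  rcases mem_bag_iff.1 hxi with h | rfl | h | h | h
  · exact .single ⟨underlying_adj_of_arc hT h, self_mem_bag, hxi⟩
  · exact .refl
  · exact reflTransGen_bagAdj_of_forall_mem_bag hT (fun j => mem_bag_iff.2 (by tauto)) _ _
  · exact reflTransGen_bagAdj_of_forall_mem_bag hT (fun j => mem_bag_iff.2 (by tauto)) _ _
  · exact reflTransGen_bagAdj_of_mem_heads hT hx h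

end Bags

theorem bags_form_treeDecomp {V : Type} [Fintype V]
    (D T : DirGraph V) (r : V) (hD : D.WellFormed)
    (hT : IsOneOptimal T D r) :
    IsTreeDecomp D (underlying T) (fun i => bag D T i.1) := by
  have hOT : T.IsOutTree r := hT.1.1.1
  refine ⟨underlying_isTree hOT, fun v hv => ⟨⟨v, hT.1.2 ▸ hv⟩, self_mem_bag⟩,
    fun a ha => hT.exists_bag_of_arc hD ha, fun x i j hxi hxj => ?_⟩
  exact (Std.Symm.symm _ _ (reflTransGen_bagAdj_of_mem_bag hOT hxi)).trans
    (reflTransGen_bagAdj_of_mem_bag hOT hxj)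

end DirGraph
end

section
/- Let T be an out-branching of a digraph D with root r, and let Q be a dipath in D that starts at r. Then the digraph obtained from T by, for each arc (u,v) ∈ A(Q)\A(T), adding the arc (u,v) and deleting the arc of T with head v, is again an out-branching of D, and it contains Q as a subgraph. -/
namespace DirGraph

variable {V : Type}

section listArcs

variable {l : List V} {a : V × V}

theorem fst_mem_of_mem_listArcs (ha : a ∈ listArcs l) : a.1 ∈ l :=
  (List.of_mem_zip ha).1

theorem snd_mem_tail_of_mem_listArcs (ha : a ∈ listArcs l) : a.2 ∈ l.tail :=
  (List.of_mem_zip ha).2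

theorem isChain_iff_forall_mem_listArcs (R : V → V → Prop) :
    ∀ l : List V, l.IsChain R ↔ ∀ a ∈ listArcs l, R a.1 a.2
  | [] | [_] => by simp [listArcs]
  | x :: y :: t => by
    simp only [List.isChain_cons_cons, isChain_iff_forall_mem_listArcs R (y :: t), listArcs,
      List.tail_cons, List.zip_cons_cons, Set.mem_ofPred_eq, List.forall_mem_cons]

theorem injOn_snd_listArcs (hl : l.Nodup) : Set.InjOn Prod.snd (listArcs l) := by
  have hsnd : ((l.zip l.tail).map Prod.snd).Nodup := by
    rw [List.map_snd_zip (by simp)]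
    exact hl.sublist (List.tail_sublist l)
  exact fun a ha b hb hab => List.inj_on_of_nodup_map hsnd ha hb hab

theorem head_notMem_heads_listArcs {r : V} (hl : l.Nodup) (hhead : l.head? = some r) :
    r ∉ heads (listArcs l) := by
  rintro ⟨a, ha, rfl⟩
  obtain ⟨t, rfl⟩ : ∃ t, l = a.2 :: t := by
    cases l with
    | nil => simp at hhead
    | cons x t => simp_all
  exact (List.nodup_cons.mp hl).1 (snd_mem_tail_of_mem_listArcs ha)

end listArcs

section Reaches

variable {G : DirGraph V} {r u v w : V}

theorem Reaches.refl (hv : v ∈ G.verts) : G.Reaches v v :=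
  ⟨[v], ⟨by simp, by simp, by simpa using hv, List.isChain_singleton v⟩, rfl, rfl⟩

theorem Reaches.tail (h : G.Reaches u v) (hvw : (v, w) ∈ G.arcs) (hw : w ∈ G.verts) :
    G.Reaches u w := by
  obtain ⟨m, ⟨hne, hnd, hmem, hch⟩, hh, hl⟩ := h
  by_cases hwm : w ∈ m
  · obtain ⟨m₁, m₂, rfl⟩ := List.append_of_mem hwm
    have hpre : m₁ ++ [w] <+: m₁ ++ w :: m₂ := by simp
    refine ⟨m₁ ++ [w], ⟨by simp, hnd.sublist hpre.sublist, fun x hx => hmem x (hpre.subset hx),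
      hch.prefix hpre⟩, ?_, by simp⟩
    rw [← hh]
    cases m₁ <;> simp
  · refine ⟨m ++ [w], ⟨by simp, ?_, ?_, ?_⟩, ?_, by simp⟩
    · simpa [List.nodup_append] using ⟨hnd, fun x hx hxw => hwm (hxw ▸ hx)⟩
    · simpa [or_imp, forall_and] using ⟨hmem, hw⟩
    · exact hch.append (List.isChain_singleton w) (by simp_all)
    · rw [← hh]
      cases m <;> simp_all

theorem Reaches.mem_of_closed {S : Set V} (hS : ∀ x y, x ∈ S → (x, y) ∈ G.arcs → y ∈ S)
    (h : G.Reaches u v) (hu : u ∈ S) : v ∈ S := by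
  obtain ⟨m, ⟨-, -, -, hch⟩, hh, hl⟩ := h
  refine hch.induction (· ∈ S) m (fun x y hxy hx => hS x y hx hxy) (fun hne => ?_) v
    (List.mem_of_getLast? hl)
  rw [List.head?_eq_some_head hne, Option.some.injEq] at hh
  exact hh ▸ hu

theorem reaches_of_isChain (harcs : ∀ a ∈ G.arcs, a.2 ∈ G.verts) (hr : r ∈ G.verts)
    {l : List V} (hl : l.IsChain fun x y => (x, y) ∈ G.arcs) (hhead : l.head? = some r) :
    ∀ v ∈ l, G.Reaches r v :=
  hl.induction _ l (fun _ _ hxy hx => hx.tail hxy (harcs _ hxy)) fun hne => by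
    rw [List.head?_eq_some_head hne, Option.some.injEq] at hhead
    rw [hhead]
    exact Reaches.refl hr

end Reaches

/-- All 1-changes for the arcs of `l` outside `T`, performed at once: they do not interfere
because distinct arcs of a dipath have distinct heads. -/
def oneChangesAlong (T : DirGraph V) (l : List V) : DirGraph V :=
  ⟨T.verts, {a ∈ T.arcs | a.2 ∉ heads (listArcs l \ T.arcs)} ∪ (listArcs l \ T.arcs)⟩

section oneChangesAlong

variable {T : DirGraph V} {l : List V} {r v : V}

theorem listArcs_subset_oneChangesAlong (hl : l.Nodup) :
    listArcs l ⊆ (T.oneChangesAlong l).arcs := by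
  intro a ha
  by_cases haT : a ∈ T.arcs
  · refine Or.inl ⟨haT, ?_⟩
    rintro ⟨b, hb, hba⟩
    exact hb.2 (injOn_snd_listArcs hl hb.1 ha hba ▸ haT)
  · exact Or.inr ⟨ha, haT⟩

theorem oneChangesAlong_arcs_subset {D : DirGraph V} (hTD : T.arcs ⊆ D.arcs)
    (hlD : l.IsChain fun x y => (x, y) ∈ D.arcs) : (T.oneChangesAlong l).arcs ⊆ D.arcs := by
  rintro a (ha | ha)
  · exact hTD ha.1
  · exact (isChain_iff_forall_mem_listArcs _ l).mp hlD a ha.1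

theorem inDeg_oneChangesAlong_of_notMem (hv : v ∉ heads (listArcs l \ T.arcs)) :
    (T.oneChangesAlong l).inDeg v = T.inDeg v := by
  refine congrArg Set.ncard (Set.ext fun a => ⟨?_, ?_⟩)
  · rintro ⟨⟨ha, -⟩ | ha, rfl⟩
    · exact ⟨ha, rfl⟩
    · exact absurd ⟨a, ha, rfl⟩ hv
  · rintro ⟨ha, rfl⟩
    exact ⟨Or.inl ⟨ha, hv⟩, rfl⟩

theorem inDeg_oneChangesAlong_of_mem (hl : l.Nodup) (hv : v ∈ heads (listArcs l \ T.arcs)) :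
    (T.oneChangesAlong l).inDeg v = 1 := by
  obtain ⟨b, hb, rfl⟩ := hv
  refine Set.ncard_eq_one.mpr ⟨b, Set.ext fun a => ⟨?_, ?_⟩⟩
  · rintro ⟨⟨-, ha⟩ | ha, hab⟩
    · exact absurd ⟨b, hb, hab.symm⟩ ha
    · exact injOn_snd_listArcs hl ha.1 hb.1 hab
  · rintro rfl
    exact ⟨Or.inr hb, rfl⟩

theorem IsOutTree.oneChangesAlong (hT : T.IsOutTree r) (hl : l.Nodup) (hhead : l.head? = some r)
    (hlT : ∀ v ∈ l, v ∈ T.verts) : (T.oneChangesAlong l).IsOutTree r := by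
  set T' := T.oneChangesAlong l
  have harcs : ∀ a ∈ T'.arcs, a.1 ∈ T'.verts ∧ a.2 ∈ T'.verts := by
    rintro a (ha | ha)
    · exact hT.arcs_mem a ha.1
    · exact ⟨hlT _ (fst_mem_of_mem_listArcs ha.1),
        hlT _ (List.mem_of_mem_tail (snd_mem_tail_of_mem_listArcs ha.1))⟩
  have hreach_l : ∀ v ∈ l, T'.Reaches r v :=
    reaches_of_isChain (fun a ha => (harcs a ha).2) hT.root_mem
      ((isChain_iff_forall_mem_listArcs _ l).mpr fun a ha => listArcs_subset_oneChangesAlong hl ha)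
      hhead
  refine ⟨harcs, hT.root_mem, ?_, fun v hv hvr => ?_, fun v hv => ?_⟩
  · have hr : r ∉ heads (listArcs l \ T.arcs) := fun h =>
      head_notMem_heads_listArcs hl hhead (Set.image_mono Set.sdiff_subset h)
    rw [inDeg_oneChangesAlong_of_notMem hr, hT.root_indeg]
  · by_cases hvQ : v ∈ heads (listArcs l \ T.arcs)
    · exact inDeg_oneChangesAlong_of_mem hl hvQ
    · rw [inDeg_oneChangesAlong_of_notMem hvQ, hT.indeg_one v hv hvr]
  · refine (hT.reach_root v hv).mem_of_closed (S := {x | T'.Reaches r x}) (fun x y hx hxy => ?_)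
      (Reaches.refl hT.root_mem)
    by_cases hyQ : y ∈ heads (listArcs l \ T.arcs)
    · obtain ⟨b, hb, rfl⟩ := hyQ
      exact hreach_l _ (List.mem_of_mem_tail (snd_mem_tail_of_mem_listArcs hb.1))
    · exact Reaches.tail hx (Or.inl ⟨hxy, hyQ⟩) (hT.arcs_mem _ hxy).2

end oneChangesAlong

theorem oneChanges_along_dipath_general {V : Type}
    (D T : DirGraph V) (r : V) (l : List V)
    (hT : IsOutBranching T D r)
    (hQ : D.IsDipath l) (hhead : l.head? = some r) :
    IsOutBranching
      (⟨T.verts, {a ∈ T.arcs | a.2 ∉ heads (listArcs l \ T.arcs)} ∪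
        (listArcs l \ T.arcs)⟩ : DirGraph V) D r ∧
    IsSubgraph (⟨{v | v ∈ l}, listArcs l⟩ : DirGraph V)
      (⟨T.verts, {a ∈ T.arcs | a.2 ∉ heads (listArcs l \ T.arcs)} ∪
        (listArcs l \ T.arcs)⟩ : DirGraph V) := by
  obtain ⟨⟨hT, hTD⟩, hTverts⟩ := hT
  obtain ⟨-, hl, hlD, hlarcs⟩ := hQ
  have hlT : ∀ v ∈ l, v ∈ T.verts := hTverts ▸ hlD
  have hT' : (T.oneChangesAlong l).IsOutTree r := hT.oneChangesAlong hl hhead hlT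
  exact ⟨⟨⟨hT', hTverts.subset, oneChangesAlong_arcs_subset hTD.2 hlarcs⟩, hTverts⟩,
    hlT, listArcs_subset_oneChangesAlong hl⟩

theorem oneChanges_along_dipath {V : Type} [Fintype V]
    (D T : DirGraph V) (r : V) (l : List V) (hD : D.WellFormed)
    (hT : IsOutBranching T D r)
    (hQ : D.IsDipath l) (hhead : l.head? = some r) :
    IsOutBranching
      (⟨T.verts, {a ∈ T.arcs | a.2 ∉ heads (listArcs l \ T.arcs)} ∪
        (listArcs l \ T.arcs)⟩ : DirGraph V) D r ∧
    IsSubgraph (⟨{v | v ∈ l}, listArcs l⟩ : DirGraph V)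
      (⟨T.verts, {a ∈ T.arcs | a.2 ∉ heads (listArcs l \ T.arcs)} ∪
        (listArcs l \ T.arcs)⟩ : DirGraph V) :=
  oneChanges_along_dipath_general D T r l hT hQ hhead

end DirGraph
end
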